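/- Let W_{ℝ₊}: ℝ₊² → [0,1] be a symmetric A_{ℝ₊}-Lipschitz kernel, let t_N > 0 and W_{N}(u,v) = W_{ℝ₊}(u·t_N, v·t_N). Let u_1 ≤ … ≤ u_N be the order statistics of N i.i.d. Uniform[0,1] random variables and let P̄_N(u,v) = Σ_{i,j=1}^N W_{N}(u_i,u_j)·1{u ∈ I_i}·1{v ∈ I_j}. Then E‖P̄_N − W_{N}‖_{L²([0,1]²)} ≤ 2·A_{ℝ₊}·t_N/√(6N). -/

import Mathlib

open MeasureTheory Set ProbabilityTheory

noncomputable section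

/-- The `i`-th cell of the equal-spaced partition of `[0,1]` into `m` pieces. -/
def cell (m : ℕ) (i : Fin m) : Set ℝ :=
  if (i : ℕ) = m - 1 then Set.Icc ((m - 1 : ℝ) / m) 1
  else Set.Ico ((i : ℝ) / m) (((i : ℝ) + 1) / m)

/-- Piecewise-constant interpolation of a vector. -/
def interp (m : ℕ) (x : Fin m → ℝ) : ℝ → ℝ :=
  fun u => ∑ i, x i * (cell m i).indicator (fun _ => (1 : ℝ)) u

/-- Induced graphon (step kernel) of a matrix. -/
def interp2 (m : ℕ) (S : Fin m → Fin m → ℝ) : ℝ → ℝ → ℝ :=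
  fun u v => ∑ i, ∑ j, S i j * (cell m i).indicator (fun _ => (1 : ℝ)) u *
    (cell m j).indicator (fun _ => (1 : ℝ)) v

/-- L² norm on [0,1]. -/
def l2 (f : ℝ → ℝ) : ℝ := Real.sqrt (∫ u in Set.Icc (0 : ℝ) 1, (f u) ^ 2)

/-- L² norm on [0,1]². -/
def kl2 (W : ℝ → ℝ → ℝ) : ℝ :=
  Real.sqrt (∫ q in (Set.Icc (0 : ℝ) 1) ×ˢ (Set.Icc (0 : ℝ) 1), (W q.1 q.2) ^ 2)

/-- Graphon shift operator. -/
def shiftOp (W : ℝ → ℝ → ℝ) (X : ℝ → ℝ) : ℝ → ℝ :=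
  fun v => ∫ u in Set.Icc (0 : ℝ) 1, W u v * X u

/-- Iterated graphon shift. -/
def shiftIter (W : ℝ → ℝ → ℝ) (X : ℝ → ℝ) : ℕ → ℝ → ℝ
  | 0 => X
  | k + 1 => shiftOp W (shiftIter W X k)

/-- Graphon convolutional filter with taps `h`. -/
def gfilter {K : ℕ} (h : Fin K → ℝ) (W : ℝ → ℝ → ℝ) (X : ℝ → ℝ) : ℝ → ℝ :=
  fun v => ∑ k, h k * shiftIter W X k v

/-- Frequency response of a filter. -/
def freqResp {K : ℕ} (h : Fin K → ℝ) (lam : ℝ) : ℝ := ∑ k, h k * lam ^ (k : ℕ)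

/-- Graph convolutional filter with taps `h`. -/
def mfilter {K n : ℕ} (h : Fin K → ℝ) (S : Matrix (Fin n) (Fin n) ℝ) (x : Fin n → ℝ) :
    Fin n → ℝ :=
  ∑ k, h k • (S ^ (k : ℕ)).mulVec x

/-- `lam` is a nonzero eigenvalue of the integral operator with kernel `W` on `L²[0,1]`. -/
def IsEig (W : ℝ → ℝ → ℝ) (lam : ℝ) : Prop :=
  lam ≠ 0 ∧ ∃ φ : ℝ → ℝ, MemLp φ 2 (volume.restrict (Set.Icc (0 : ℝ) 1)) ∧
    ¬ (φ =ᵐ[volume.restrict (Set.Icc (0 : ℝ) 1)] 0) ∧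
    (∀ᵐ v ∂(volume.restrict (Set.Icc (0 : ℝ) 1)), shiftOp W φ v = lam * φ v)

/-- `Δh(λ) = min_k max_i |h(λ_i) - k|` over the eigenvalues of `W`. -/
def deltaH {K : ℕ} (h : Fin K → ℝ) (W : ℝ → ℝ → ℝ) : ℝ :=
  ⨅ k : ℝ, ⨆ lam ∈ {l : ℝ | IsEig W l}, |freqResp h lam - k|

/-- Bernoulli law with parameter `p`, as a measure on `ℝ` supported on `{0,1}`. -/
def bernoulliReal (p : ℝ) : Measure ℝ :=
  ENNReal.ofReal p • Measure.dirac 1 + ENNReal.ofReal (1 - p) • Measure.dirac 0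

/-- Graphon (WNN) neural network features, layer by layer. -/
def wnn (σ : ℝ → ℝ) (W : ℝ → ℝ → ℝ) (K : ℕ) (Fdim : ℕ → ℕ)
    (H : ℕ → ℕ → ℕ → Fin K → ℝ) (X0 : ℕ → ℝ → ℝ) : ℕ → ℕ → ℝ → ℝ
  | 0, f => X0 f
  | l + 1, f => fun u =>
      σ (∑ g ∈ Finset.range (Fdim l), gfilter (H l g f) W (wnn σ W K Fdim H X0 l g) u)

/-- Graph convolutional network features, layer by layer. -/
def gcn (σ : ℝ → ℝ) {n : ℕ} (S : Matrix (Fin n) (Fin n) ℝ) (K : ℕ) (Fdim : ℕ → ℕ)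
    (H : ℕ → ℕ → ℕ → Fin K → ℝ) (x0 : ℕ → Fin n → ℝ) : ℕ → ℕ → Fin n → ℝ
  | 0, f => x0 f
  | l + 1, f => fun i =>
      σ ((∑ g ∈ Finset.range (Fdim l), mfilter (H l g f) S (gcn σ S K Fdim H x0 l g)) i)

/-- `u ω` is the increasing rearrangement (order statistics) of `(v i ω)_i`. -/
def SortedVersion {Ω : Type*} {N : ℕ} (u : Ω → Fin N → ℝ) (v : Fin N → Ω → ℝ) : Prop :=
  ∀ ω, Monotone (u ω) ∧ ∃ σ : Equiv.Perm (Fin N), ∀ i, u ω i = v (σ i) ω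

/-- The family `v` is i.i.d. uniform on `[0,1]`. -/
def IIDUniform {Ω : Type*} [MeasurableSpace Ω] {N : ℕ} (v : Fin N → Ω → ℝ)
    (μ : Measure Ω) : Prop :=
  (∀ i, Measurable (v i)) ∧ iIndepFun v μ ∧
    ∀ i, μ.map (v i) = volume.restrict (Set.Icc (0 : ℝ) 1)

/-- Given `ω₁` (the latent features), the edge variables `e i j ω₁ : Ω₂ → ℝ` are symmetric,
conditionally independent over pairs `i ≤ j`, with `e i j ω₁ ∼ Bernoulli (W (u ω₁ i) (u ω₁ j))`. -/
def CondBernoulliAdj {Ω₁ Ω₂ : Type*} [MeasurableSpace Ω₂]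
    (μ₂ : Measure Ω₂) {N : ℕ} (e : Fin N → Fin N → Ω₁ → Ω₂ → ℝ)
    (W : ℝ → ℝ → ℝ) (u : Ω₁ → Fin N → ℝ) : Prop :=
  (∀ i j ω₁, Measurable (e i j ω₁)) ∧
  (∀ i j ω₁, e i j ω₁ = e j i ω₁) ∧
  (∀ ω₁, iIndepFun
    (fun q : {q : Fin N × Fin N // q.1 ≤ q.2} => e q.1.1 q.1.2 ω₁) μ₂) ∧
  (∀ i j ω₁, μ₂.map (e i j ω₁) = bernoulliReal (W (u ω₁ i) (u ω₁ j)))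

/-- `L₁ = ∫_{[0,t]²} W`. -/
def L1 (Wk : ℝ → ℝ → ℝ) (t : ℝ) : ℝ :=
  ∫ q in Set.Icc (0 : ℝ) t ×ˢ Set.Icc (0 : ℝ) t, Wk q.1 q.2

/-- `L₂² = ∫_{[0,t]²} W²`. -/
def L2sq (Wk : ℝ → ℝ → ℝ) (t : ℝ) : ℝ :=
  ∫ q in Set.Icc (0 : ℝ) t ×ˢ Set.Icc (0 : ℝ) t, (Wk q.1 q.2) ^ 2

/-!
On `[0,1]²` the step kernel equals `W_N(x s, x t)`, where `x = interp N u` is the step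
interpolation of the order statistics; the Lipschitz bound and `(a + b)² ≤ 2 (a² + b²)` give
`‖P̄_N - W_N‖ ≤ 2 A t_N ‖x - id‖`, with `‖x - id‖² = ∑ᵢ ∫_{Iᵢ} (u₍ᵢ₎ - s)² ds`, a quadratic in
the `u₍ᵢ₎`. Its only non-symmetric part is `∑ᵢ (2i + 1) u₍ᵢ₎`, which for a sorted vector equals
`∑_{j,k} max(uⱼ, uₖ)`; so `‖x - id‖²` is a symmetric function of the unsorted samples, and
`E v² = 1/3`, `E max(v, v') = 2/3` give `E ‖x - id‖² = 1/(6N)`. Jensen's inequality for `√`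
(in AM–GM form, which needs no measurability of the sorted sample) concludes.
-/

section Cells

variable {N : ℕ} {i j : Fin N} {s t : ℝ}

lemma measurableSet_cell (i : Fin N) : MeasurableSet (cell N i) := by
  unfold cell
  split_ifs
  exacts [measurableSet_Icc, measurableSet_Ico]

lemma cell_of_ne_last (h : (i : ℕ) ≠ N - 1) :
    cell N i = Ico ((i : ℝ) / N) (((i : ℝ) + 1) / N) :=
  if_neg h

lemma cell_of_eq_last (h : (i : ℕ) = N - 1) :
    cell N i = Icc ((i : ℝ) / N) (((i : ℝ) + 1) / N) := by
  have hN : (i : ℝ) + 1 = N := by exact_mod_cast (by omega : (i : ℕ) + 1 = N)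
  rw [cell, if_pos h, ← hN, add_sub_cancel_right, div_self (by positivity)]

lemma cell_subset_Icc_div (i : Fin N) : cell N i ⊆ Icc ((i : ℝ) / N) (((i : ℝ) + 1) / N) := by
  by_cases h : (i : ℕ) = N - 1
  · rw [cell_of_eq_last h]
  · rw [cell_of_ne_last h]
    exact Ico_subset_Icc_self

lemma cell_subset_Icc (i : Fin N) : cell N i ⊆ Icc 0 1 := by
  have hi : (i : ℝ) + 1 ≤ N := by exact_mod_cast i.2
  exact (cell_subset_Icc_div i).trans
    (Icc_subset_Icc (by positivity) (div_le_one_of_le₀ hi (Nat.cast_nonneg N)))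

lemma setIntegral_cell (i : Fin N) (f : ℝ → ℝ) :
    ∫ s in cell N i, f s = ∫ s in (i / N : ℝ)..((i + 1) / N), f s := by
  rw [intervalIntegral.integral_of_le (by gcongr; linarith)]
  by_cases h : (i : ℕ) = N - 1
  · rw [cell_of_eq_last h, integral_Icc_eq_integral_Ioc]
  · rw [cell_of_ne_last h, integral_Ico_eq_integral_Ioc]

lemma lt_of_mem_cell_of_lt (hij : i < j) (hs : s ∈ cell N i) (ht : t ∈ cell N j) : s < t := by
  have hlast : (i : ℕ) ≠ N - 1 := by omega
  have hij' : (i : ℝ) + 1 ≤ j := by exact_mod_cast hij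
  rw [cell_of_ne_last hlast] at hs
  calc s < ((i : ℝ) + 1) / N := hs.2
    _ ≤ (j : ℝ) / N := by gcongr
    _ ≤ t := (cell_subset_Icc_div j ht).1

lemma pairwise_disjoint_cell : Pairwise (Function.onFun Disjoint (cell N)) := by
  intro i j hij
  rw [Function.onFun, Set.disjoint_left]
  intro s hi hj
  rcases hij.lt_or_gt with h | h
  · exact (lt_of_mem_cell_of_lt h hi hj).false
  · exact (lt_of_mem_cell_of_lt h hj hi).false

lemma iUnion_cell (hN : 0 < N) : ⋃ i, cell N i = Icc 0 1 := by
  refine (iUnion_subset cell_subset_Icc).antisymm fun s hs => mem_iUnion.2 ?_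
  have hN' : (0 : ℝ) < N := by exact_mod_cast hN
  by_cases hlast : ((N : ℝ) - 1) / N ≤ s
  · exact ⟨⟨N - 1, by omega⟩, by rw [cell, if_pos rfl]; exact ⟨hlast, hs.2⟩⟩
  · set k := ⌊s * N⌋₊
    have hk : (k : ℝ) ≤ s * N := Nat.floor_le (mul_nonneg hs.1 hN'.le)
    have hk' : s * N < k + 1 := Nat.lt_floor_add_one _
    have hkN : k + 1 < N := by
      rw [not_le, lt_div_iff₀ hN'] at hlast
      exact_mod_cast (by linarith : (k : ℝ) + 1 < N)
    refine ⟨⟨k, by omega⟩, ?_⟩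
    rw [cell_of_ne_last (by simp only; omega)]
    exact ⟨(div_le_iff₀ hN').2 hk, (lt_div_iff₀ hN').2 hk'⟩

lemma sum_mul_indicator_cell (hs : s ∈ cell N i) (f : Fin N → ℝ) :
    ∑ j, f j * (cell N j).indicator (fun _ => (1 : ℝ)) s = f i := by
  rw [Finset.sum_eq_single i]
  · rw [indicator_of_mem hs, mul_one]
  · intro j _ hji
    rw [indicator_of_notMem ((pairwise_disjoint_cell hji.symm).notMem_of_mem_left hs), mul_zero]
  · simp

lemma interp_of_mem_cell (hs : s ∈ cell N i) (x : Fin N → ℝ) : interp N x s = x i :=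
  sum_mul_indicator_cell hs x

lemma interp2_of_mem_cell (hs : s ∈ cell N i) (ht : t ∈ cell N j) (S : Fin N → Fin N → ℝ) :
    interp2 N S s t = S i j := by
  simp only [interp2, mul_right_comm _ _ ((cell N _).indicator _ t), ← Finset.sum_mul]
  rw [sum_mul_indicator_cell hs fun i' => ∑ j', S i' j' * (cell N j').indicator _ t,
    sum_mul_indicator_cell ht]

end Cells

section StepError

variable {N : ℕ}

lemma integral_cell_sq_sub (i : Fin N) (c : ℝ) :
    ∫ s in cell N i, (c - s) ^ 2
      = c ^ 2 / N - (2 * i + 1) * c / N ^ 2 + (((i : ℝ) + 1) ^ 3 - (i : ℝ) ^ 3) / (3 * N ^ 3) := by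
  have hN : (N : ℝ) ≠ 0 := by have := i.pos; positivity
  rw [setIntegral_cell, intervalIntegral.integral_comp_sub_left (fun x => x ^ 2) c, integral_pow]
  norm_num
  field_simp
  ring

lemma integrableOn_sq_interp_sub (hN : 0 < N) (x : Fin N → ℝ) :
    IntegrableOn (fun s => (interp N x s - s) ^ 2) (Icc 0 1) := by
  rw [← iUnion_cell hN, integrableOn_finite_iUnion]
  intro i
  have hcont : IntegrableOn (fun s => (x i - s) ^ 2) (cell N i) :=
    (continuous_const.sub continuous_id).pow 2 |>.integrableOn_Icc.mono_set
      (cell_subset_Icc_div i)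
  exact hcont.congr_fun (fun s hs => by rw [interp_of_mem_cell hs]) (measurableSet_cell i)

lemma integral_sq_interp_sub (hN : 0 < N) (x : Fin N → ℝ) :
    ∫ s in Icc 0 1, (interp N x s - s) ^ 2
      = (∑ i, x i ^ 2) / N - (∑ i : Fin N, (2 * i + 1) * x i) / N ^ 2 + 1 / 3 := by
  have hN' : (N : ℝ) ≠ 0 := by positivity
  have hcells : ∀ i, ∫ s in cell N i, (interp N x s - s) ^ 2 = ∫ s in cell N i, (x i - s) ^ 2 :=
    fun i => setIntegral_congr_fun (measurableSet_cell i) fun s hs => by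
      rw [interp_of_mem_cell hs]
  have htelescope : ∑ i : Fin N, (((i : ℝ) + 1) ^ 3 - (i : ℝ) ^ 3) = (N : ℝ) ^ 3 := by
    rw [Fin.sum_univ_eq_sum_range (fun i : ℕ => ((i : ℝ) + 1) ^ 3 - (i : ℝ) ^ 3) N]
    have h := Finset.sum_range_sub (fun i : ℕ => (i : ℝ) ^ 3) N
    push_cast at h
    rw [h]
    norm_num
  rw [← iUnion_cell hN, integral_iUnion measurableSet_cell pairwise_disjoint_cell
    ((iUnion_cell hN).symm ▸ integrableOn_sq_interp_sub hN x), tsum_fintype]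
  simp only [hcells, integral_cell_sq_sub]
  rw [Finset.sum_add_distrib, Finset.sum_sub_distrib, ← Finset.sum_div, ← Finset.sum_div,
    ← Finset.sum_div, htelescope]
  field_simp

lemma sum_sum_max_of_monotone {w : Fin N → ℝ} (hw : Monotone w) :
    ∑ i, ∑ k, max (w i) (w k) = ∑ i : Fin N, (2 * i + 1) * w i := by
  have hsplit : ∀ i k,
      max (w i) (w k) = (if k ≤ i then w i else 0) + (if i < k then w k else 0) := by
    intro i k
    rcases le_or_gt k i with h | h
    · simp [h, not_lt.2 h, hw h]
    · simp [h, not_le.2 h, hw h.le]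
  simp only [hsplit, Finset.sum_add_distrib]
  rw [Finset.sum_comm (f := fun i k => if i < k then w k else 0)]
  simp only [Finset.sum_ite, Finset.sum_const_zero, add_zero, Finset.sum_const, nsmul_eq_mul,
    ← Finset.sum_add_distrib]
  refine Finset.sum_congr rfl fun i _ => ?_
  rw [Finset.filter_ge_eq_Iic, Finset.filter_gt_eq_Iio, Fin.card_Iic, Fin.card_Iio]
  push_cast
  ring

end StepError

lemma integral_max_Icc_prod :
    ∫ q in Icc (0 : ℝ) 1 ×ˢ Icc (0 : ℝ) 1, max q.1 q.2 = 2 / 3 := by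
  have hint : IntegrableOn (fun q : ℝ × ℝ => max q.1 q.2) (Icc 0 1 ×ˢ Icc 0 1) :=
    (continuous_fst.max continuous_snd).continuousOn.integrableOn_compact
      (isCompact_Icc.prod isCompact_Icc)
  have hinner : ∀ x ∈ Icc (0 : ℝ) 1, ∫ y in Icc (0 : ℝ) 1, max x y = (1 + x ^ 2) / 2 := by
    intro x hx
    have hcont : Continuous fun y => max x y := continuous_const.max continuous_id
    have hleft : ∫ y in (0 : ℝ)..x, max x y = ∫ _ in (0 : ℝ)..x, x :=
      intervalIntegral.integral_congr fun y hy => max_eq_left (uIcc_of_le hx.1 ▸ hy).2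
    have hright : ∫ y in x..1, max x y = ∫ y in x..1, y :=
      intervalIntegral.integral_congr fun y hy => max_eq_right (uIcc_of_le hx.2 ▸ hy).1
    rw [integral_Icc_eq_integral_Ioc, ← intervalIntegral.integral_of_le zero_le_one,
      ← intervalIntegral.integral_add_adjacent_intervals (hcont.intervalIntegrable 0 x)
        (hcont.intervalIntegrable x 1), hleft, hright]
    simp
    ring
  rw [Measure.volume_eq_prod, setIntegral_prod _ hint,
    setIntegral_congr_fun measurableSet_Icc hinner, integral_Icc_eq_integral_Ioc,
    ← intervalIntegral.integral_of_le zero_le_one]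
  norm_num

section IIDUniform

variable {Ω : Type*} [MeasurableSpace Ω] {μ : Measure Ω} {N : ℕ} {v : Fin N → Ω → ℝ}

lemma integrable_comp_of_map_eq_restrict {E : Type*} [MeasurableSpace E] [TopologicalSpace E]
    [OpensMeasurableSpace E] [T2Space E] {ν : Measure E} [IsFiniteMeasureOnCompacts ν]
    {K : Set E} (hK : IsCompact K) {X : Ω → E} (hX : AEMeasurable X μ)
    (hlaw : μ.map X = ν.restrict K) {g : E → ℝ} (hg : Continuous g) :
    Integrable (fun ω => g (X ω)) μ :=
  (integrable_map_measure hg.aestronglyMeasurable hX).1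
    (hlaw ▸ hg.continuousOn.integrableOn_compact hK)

lemma IIDUniform.ae_mem_Icc (hv : IIDUniform v μ) : ∀ᵐ ω ∂μ, ∀ j, v j ω ∈ Icc (0 : ℝ) 1 :=
  ae_all_iff.2 fun j => (ae_map_iff (hv.1 j).aemeasurable measurableSet_Icc).1
    (hv.2.2 j ▸ ae_restrict_mem measurableSet_Icc)

lemma IIDUniform.map_pair [IsFiniteMeasure μ] (hv : IIDUniform v μ) {j k : Fin N} (hjk : j ≠ k) :
    μ.map (fun ω => (v j ω, v k ω)) = volume.restrict (Icc (0 : ℝ) 1 ×ˢ Icc (0 : ℝ) 1) := by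
  rw [(indepFun_iff_map_prod_eq_prod_map_map (hv.1 j).aemeasurable (hv.1 k).aemeasurable).1
    (hv.2.1.indepFun hjk), hv.2.2 j, hv.2.2 k, Measure.prod_restrict, Measure.volume_eq_prod]

lemma IIDUniform.integrable_sq (hv : IIDUniform v μ) (j : Fin N) :
    Integrable (fun ω => v j ω ^ 2) μ :=
  integrable_comp_of_map_eq_restrict isCompact_Icc (hv.1 j).aemeasurable (hv.2.2 j)
    (continuous_pow 2)

lemma IIDUniform.integral_sq (hv : IIDUniform v μ) (j : Fin N) : ∫ ω, v j ω ^ 2 ∂μ = 1 / 3 := by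
  rw [← integral_map (hv.1 j).aemeasurable (continuous_pow 2).aestronglyMeasurable, hv.2.2 j,
    integral_Icc_eq_integral_Ioc, ← intervalIntegral.integral_of_le zero_le_one]
  norm_num

lemma IIDUniform.integrable_max [IsFiniteMeasure μ] (hv : IIDUniform v μ) (j k : Fin N) :
    Integrable (fun ω => max (v j ω) (v k ω)) μ := by
  by_cases hjk : j = k
  · simp only [hjk, max_self]
    exact integrable_comp_of_map_eq_restrict isCompact_Icc (hv.1 k).aemeasurable (hv.2.2 k)
      continuous_id
  · exact integrable_comp_of_map_eq_restrict (isCompact_Icc.prod isCompact_Icc)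
      ((hv.1 j).prodMk (hv.1 k)).aemeasurable (hv.map_pair hjk) (continuous_fst.max continuous_snd)

lemma IIDUniform.integral_max [IsFiniteMeasure μ] (hv : IIDUniform v μ) (j k : Fin N) :
    ∫ ω, max (v j ω) (v k ω) ∂μ = if j = k then 1 / 2 else 2 / 3 := by
  split_ifs with hjk
  · simp only [hjk, max_self]
    rw [← integral_map (f := fun x => x) (hv.1 k).aemeasurable aestronglyMeasurable_id, hv.2.2 k,
      integral_Icc_eq_integral_Ioc, ← intervalIntegral.integral_of_le zero_le_one]
    norm_num
  · calc ∫ ω, max (v j ω) (v k ω) ∂μ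
          = ∫ q, max q.1 q.2 ∂(μ.map fun ω => (v j ω, v k ω)) :=
        (integral_map ((hv.1 j).prodMk (hv.1 k)).aemeasurable
          (continuous_fst.max continuous_snd).aestronglyMeasurable).symm
      _ = 2 / 3 := by rw [hv.map_pair hjk, integral_max_Icc_prod]

lemma IIDUniform.integrable_sum_sq_sub_sum_max [IsFiniteMeasure μ] (hv : IIDUniform v μ) :
    Integrable
      (fun ω => (∑ j, v j ω ^ 2) / N - (∑ j, ∑ k, max (v j ω) (v k ω)) / N ^ 2 + 1 / 3) μ :=
  (((integrable_finsetSum _ fun j _ => hv.integrable_sq j).div_const _).sub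
    ((integrable_finsetSum _ fun j _ => integrable_finsetSum _ fun k _ =>
      hv.integrable_max j k).div_const _)).add (integrable_const _)

lemma IIDUniform.integral_sum_sq_sub_sum_max [IsProbabilityMeasure μ] (hN : 0 < N)
    (hv : IIDUniform v μ) :
    ∫ ω, ((∑ j, v j ω ^ 2) / N - (∑ j, ∑ k, max (v j ω) (v k ω)) / N ^ 2 + 1 / 3) ∂μ
      = 1 / (6 * (N : ℝ)) := by
  have hsq := integrable_finsetSum Finset.univ fun j _ => hv.integrable_sq (μ := μ) j
  have hmax := integrable_finsetSum Finset.univ fun j _ => integrable_finsetSum Finset.univ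
    fun k _ => hv.integrable_max (μ := μ) j k
  have hdiff : Integrable (fun ω => (∑ j, v j ω ^ 2) / N
      - (∑ j, ∑ k, max (v j ω) (v k ω)) / N ^ 2) μ :=
    (hsq.div_const _).sub (hmax.div_const _)
  rw [integral_add hdiff (integrable_const _), integral_sub (hsq.div_const _) (hmax.div_const _),
    integral_div, integral_div, integral_finsetSum _ fun j _ => hv.integrable_sq j,
    integral_finsetSum _ fun j _ => integrable_finsetSum _ fun k _ => hv.integrable_max j k]
  simp only [integral_finsetSum _ fun k _ => hv.integrable_max _ k, hv.integral_sq,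
    hv.integral_max]
  have hrow : ∀ j : Fin N, ∑ k, (if j = k then (1 : ℝ) / 2 else 2 / 3)
      = ∑ k : Fin N, ((2 : ℝ) / 3 - if j = k then 1 / 6 else 0) :=
    fun j => Finset.sum_congr rfl fun k _ => by split_ifs <;> norm_num
  rw [Finset.sum_congr rfl fun j _ => hrow j]
  simp only [Finset.sum_sub_distrib, Finset.sum_ite_eq, Finset.mem_univ, if_true, Finset.sum_const,
    Finset.card_univ, Fintype.card_fin, nsmul_eq_mul, integral_const, probReal_univ, one_smul]
  field_simp
  ring

end IIDUniform

lemma kl2_le_of_abs_le {D : ℝ → ℝ → ℝ} {δ : ℝ → ℝ} {C : ℝ} (hC : 0 ≤ C)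
    (hδ : IntegrableOn (fun s => δ s ^ 2) (Icc 0 1))
    (hD : ∀ s ∈ Icc (0 : ℝ) 1, ∀ t ∈ Icc (0 : ℝ) 1, |D s t| ≤ C * (|δ s| + |δ t|)) :
    kl2 D ≤ 2 * C * l2 δ := by
  set ν := volume.restrict (Icc (0 : ℝ) 1)
  have hprod : volume.restrict (Icc (0 : ℝ) 1 ×ˢ Icc (0 : ℝ) 1) = ν.prod ν := by
    rw [Measure.volume_eq_prod, Measure.prod_restrict]
  have hbound : ∀ᵐ q ∂(ν.prod ν), D q.1 q.2 ^ 2 ≤ 2 * C ^ 2 * (δ q.1 ^ 2 + δ q.2 ^ 2) := by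
    rw [← hprod]
    filter_upwards [ae_restrict_mem (measurableSet_Icc.prod measurableSet_Icc)] with q hq
    calc D q.1 q.2 ^ 2 = |D q.1 q.2| ^ 2 := (sq_abs _).symm
      _ ≤ (C * (|δ q.1| + |δ q.2|)) ^ 2 := pow_le_pow_left₀ (abs_nonneg _) (hD _ hq.1 _ hq.2) 2
      _ ≤ 2 * C ^ 2 * (δ q.1 ^ 2 + δ q.2 ^ 2) := by
        nlinarith [sq_nonneg (|δ q.1| - |δ q.2|), sq_abs (δ q.1), sq_abs (δ q.2), sq_nonneg C]
  have hsum : Integrable (fun q : ℝ × ℝ => δ q.1 ^ 2 + δ q.2 ^ 2) (ν.prod ν) :=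
    (hδ.comp_fst ν).add (hδ.comp_snd ν)
  have hintegral : ∫ q, 2 * C ^ 2 * (δ q.1 ^ 2 + δ q.2 ^ 2) ∂(ν.prod ν)
      = (2 * C) ^ 2 * ∫ s, δ s ^ 2 ∂ν := by
    rw [integral_const_mul, integral_add (hδ.comp_fst ν) (hδ.comp_snd ν),
      integral_fun_fst (fun s => δ s ^ 2), integral_fun_snd (fun s => δ s ^ 2)]
    simp [ν]
    ring
  calc kl2 D ≤ √((2 * C) ^ 2 * ∫ s, δ s ^ 2 ∂ν) := by
        refine Real.sqrt_le_sqrt ?_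
        rw [hprod, ← hintegral]
        exact integral_mono_of_nonneg (ae_of_all _ fun q => sq_nonneg _) (hsum.const_mul _) hbound
    _ = 2 * C * l2 δ := by rw [Real.sqrt_mul (sq_nonneg _), Real.sqrt_sq (by positivity), l2]

lemma kl2_interp2_sub_le {N : ℕ} (hN : 0 < N) {A t : ℝ} (hA : 0 ≤ A) (ht : 0 ≤ t)
    {W : ℝ → ℝ → ℝ}
    (hW : ∀ a b c d : ℝ, 0 ≤ a → 0 ≤ b → 0 ≤ c → 0 ≤ d →
      |W a b - W c d| ≤ A * (|a - c| + |b - d|))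
    {x : Fin N → ℝ} (hx : ∀ i, 0 ≤ x i) :
    kl2 (fun s s' => interp2 N (fun i j => W (x i * t) (x j * t)) s s' - W (s * t) (s' * t))
      ≤ 2 * (A * t) * l2 (fun s => interp N x s - s) := by
  refine kl2_le_of_abs_le (mul_nonneg hA ht) (integrableOn_sq_interp_sub hN x) fun s hs s' hs' => ?_
  obtain ⟨i, hi⟩ := mem_iUnion.1 ((iUnion_cell hN).symm ▸ hs)
  obtain ⟨j, hj⟩ := mem_iUnion.1 ((iUnion_cell hN).symm ▸ hs')
  rw [interp2_of_mem_cell hi hj, interp_of_mem_cell hi, interp_of_mem_cell hj]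
  calc |W (x i * t) (x j * t) - W (s * t) (s' * t)|
      ≤ A * (|x i * t - s * t| + |x j * t - s' * t|) :=
        hW _ _ _ _ (mul_nonneg (hx i) ht) (mul_nonneg (hx j) ht) (mul_nonneg hs.1 ht)
          (mul_nonneg hs'.1 ht)
    _ = A * t * (|x i - s| + |x j - s'|) := by
        rw [← sub_mul, ← sub_mul, abs_mul, abs_mul, abs_of_nonneg ht]
        ring

lemma integral_le_mul_sqrt_integral {Ω : Type*} [MeasurableSpace Ω] {μ : Measure Ω}
    [IsProbabilityMeasure μ] {f g : Ω → ℝ} {C : ℝ} (hC : 0 ≤ C) (hg : 0 ≤ g)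
    (hf : Integrable f μ) (hf0 : 0 ≤ f) (hgf : ∀ᵐ ω ∂μ, g ω ≤ C * √(f ω)) :
    ∫ ω, g ω ∂μ ≤ C * √(∫ ω, f ω ∂μ) := by
  rcases (integral_nonneg hf0).eq_or_lt with hzero | hpos
  · have hf_ae : f =ᵐ[μ] 0 := (integral_eq_zero_iff_of_nonneg hf0 hf).1 hzero.symm
    rw [← hzero, Real.sqrt_zero, mul_zero]
    refine integral_nonpos_of_ae ?_
    filter_upwards [hgf, hf_ae] with ω hgω hfω
    simpa [hfω] using hgω
  · set c := √(∫ ω, f ω ∂μ)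
    have hc : 0 < c := Real.sqrt_pos.2 hpos
    have hc2 : c ^ 2 = ∫ ω, f ω ∂μ := Real.sq_sqrt hpos.le
    -- AM–GM `2 c √f ≤ f + c²`, tight after integration since `c² = ∫ f`.
    have hamgm : ∀ ω, C * √(f ω) ≤ C / (2 * c) * f ω + C * c / 2 := by
      intro ω
      have hsq := Real.sq_sqrt (hf0 ω)
      rw [div_mul_eq_mul_div, div_add_div _ _ (by positivity) two_ne_zero,
        le_div_iff₀ (by positivity)]
      nlinarith [mul_nonneg hC (sq_nonneg (√(f ω) - c))]
    calc ∫ ω, g ω ∂μ ≤ ∫ ω, (C / (2 * c) * f ω + C * c / 2) ∂μ :=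
          integral_mono_of_nonneg (ae_of_all _ hg) ((hf.const_mul _).add (integrable_const _))
            (hgf.mono fun ω h => h.trans (hamgm ω))
      _ = C * c := by
          rw [integral_add (hf.const_mul _) (integrable_const _), integral_const_mul,
            integral_const, probReal_univ, one_smul, ← hc2]
          field_simp
          ring

lemma SortedVersion.integral_sq_interp_sub {Ω : Type*} {N : ℕ} {u : Ω → Fin N → ℝ}
    {v : Fin N → Ω → ℝ} (hN : 0 < N) (hord : SortedVersion u v) (ω : Ω) :
    ∫ s in Icc 0 1, (interp N (u ω) s - s) ^ 2
      = (∑ j, v j ω ^ 2) / N - (∑ j, ∑ k, max (v j ω) (v k ω)) / N ^ 2 + 1 / 3 := by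
  obtain ⟨hmono, σ, hσ⟩ := hord ω
  rw [_root_.integral_sq_interp_sub hN, ← sum_sum_max_of_monotone hmono]
  simp only [hσ, Equiv.sum_comp σ fun j => v j ω ^ 2,
    Equiv.sum_comp σ fun j => ∑ k, max (v j ω) (v (σ k) ω)]
  rw [Finset.sum_congr rfl fun j _ => Equiv.sum_comp σ fun k => max (v j ω) (v k ω)]

theorem expected_kernel_discretization_error_general {Ω : Type*} [MeasurableSpace Ω]
    (μ : Measure Ω) [IsProbabilityMeasure μ]
    (A tN : ℝ) (htN : 0 < tN) (Wk : ℝ → ℝ → ℝ)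
    (hWlip : ∀ a b c d : ℝ, 0 ≤ a → 0 ≤ b → 0 ≤ c → 0 ≤ d →
      |Wk a b - Wk c d| ≤ A * (|a - c| + |b - d|))
    (N : ℕ) (hN : 0 < N)
    (v : Fin N → Ω → ℝ) (hiid : IIDUniform v μ)
    (u : Ω → Fin N → ℝ) (hord : SortedVersion u v) :
    (∫ ω, kl2 (fun s t =>
        interp2 N (fun i j => Wk (u ω i * tN) (u ω j * tN)) s t - Wk (s * tN) (t * tN)) ∂μ)
      ≤ 2 * A * tN / Real.sqrt (6 * N) := by
  have hA : 0 ≤ A := by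
    simpa using (abs_nonneg _).trans (hWlip 1 0 0 0 zero_le_one le_rfl le_rfl le_rfl)
  have hu : ∀ᵐ ω ∂μ, ∀ i, 0 ≤ u ω i := by
    filter_upwards [hiid.ae_mem_Icc] with ω hω i
    obtain ⟨-, σ, hσ⟩ := hord ω
    exact hσ i ▸ (hω (σ i)).1
  calc _ ≤ 2 * (A * tN) * √(∫ ω, ((∑ j, v j ω ^ 2) / N
          - (∑ j, ∑ k, max (v j ω) (v k ω)) / N ^ 2 + 1 / 3) ∂μ) := by
        refine integral_le_mul_sqrt_integral (by positivity) (fun ω => Real.sqrt_nonneg _)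
          hiid.integrable_sum_sq_sub_sum_max
          (fun ω => hord.integral_sq_interp_sub hN ω ▸ setIntegral_nonneg measurableSet_Icc
            fun s _ => sq_nonneg _) ?_
        filter_upwards [hu] with ω hω
        rw [← hord.integral_sq_interp_sub hN ω]
        exact kl2_interp2_sub_le hN hA htN.le hWlip hω
    _ = 2 * A * tN / √(6 * N) := by
        rw [hiid.integral_sum_sq_sub_sum_max hN, Real.sqrt_div' _ (by positivity), Real.sqrt_one]
        ring

/-- expected L² error of the step kernel at order statistics of i.i.d.
uniforms: `E‖P̄_N − W_N‖ ≤ 2·A·t_N/√(6N)`. -/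
theorem expected_kernel_discretization_error {Ω : Type*} [MeasurableSpace Ω]
    (μ : Measure Ω) [IsProbabilityMeasure μ]
    (A tN : ℝ) (htN : 0 < tN) (Wk : ℝ → ℝ → ℝ)
    (hWmeas : Measurable (Function.uncurry Wk))
    (hWsym : ∀ a b, Wk a b = Wk b a)
    (hWrange : ∀ a b, 0 ≤ a → 0 ≤ b → Wk a b ∈ Set.Icc (0 : ℝ) 1)
    (hWlip : ∀ a b c d : ℝ, 0 ≤ a → 0 ≤ b → 0 ≤ c → 0 ≤ d →
      |Wk a b - Wk c d| ≤ A * (|a - c| + |b - d|))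
    (N : ℕ) (hN : 0 < N)
    (v : Fin N → Ω → ℝ) (hiid : IIDUniform v μ)
    (u : Ω → Fin N → ℝ) (hord : SortedVersion u v) :
    (∫ ω, kl2 (fun s t =>
        interp2 N (fun i j => Wk (u ω i * tN) (u ω j * tN)) s t - Wk (s * tN) (t * tN)) ∂μ)
      ≤ 2 * A * tN / Real.sqrt (6 * N) :=
  expected_kernel_discretization_error_general μ A tN htN Wk hWlip N hN v hiid u hord

end
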